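/- Let π₁, π₂ be nonnegative measures on ℝ^d with equal mass c₁ > 0, such that π_i/c₁ has mean m_i and covariance Σ_i. Then for every coupling π of π₁ and π₂, ∫∫ ‖x₂ − x₁‖² dπ(x₁,x₂) ≥ c₁ ( ‖m₂ − m₁‖² + Trace(Σ₁ + Σ₂ − 2(Σ₁^{1/2} Σ₂ Σ₁^{1/2})^{1/2}) ). -/

import Mathlib

open MeasureTheory Matrix Real

open Classical in
noncomputable def msqrt {d : ℕ} (A : Matrix (Fin d) (Fin d) ℝ) : Matrix (Fin d) (Fin d) ℝ :=
  if h : A.PosSemidef then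
    (h.1.eigenvectorUnitary : Matrix (Fin d) (Fin d) ℝ) *
      diagonal ((↑) ∘ (Real.sqrt ·) ∘ h.1.eigenvalues) *
      (star (h.1.eigenvectorUnitary : Matrix (Fin d) (Fin d) ℝ))
  else 0

noncomputable def gaussianPdf {ι : Type*} [Fintype ι] [DecidableEq ι]
    (m : EuclideanSpace ℝ ι) (S : Matrix ι ι ℝ) (x : EuclideanSpace ℝ ι) : ℝ :=
  Real.sqrt (((2 * Real.pi) ^ (Fintype.card ι) * S.det)⁻¹) *
    Real.exp (-(1 / 2) * ∑ i, ∑ j, (x i - m i) * S⁻¹ i j * (x j - m j))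

noncomputable def gaussian {ι : Type*} [Fintype ι] [DecidableEq ι]
    (m : EuclideanSpace ℝ ι) (S : Matrix ι ι ℝ) : Measure (EuclideanSpace ℝ ι) :=
  volume.withDensity fun x => ENNReal.ofReal (gaussianPdf m S x)

noncomputable def KLdiv {ι : Type*} [Fintype ι]
    (α β : Measure (EuclideanSpace ℝ ι)) : ℝ :=
  (∫ x, Real.log ((α.rnDeriv β x).toReal) ∂α) - (β Set.univ).toReal + (α Set.univ).toReal

/-!
Expanding the square, the cost equals
`c₁ (‖m₂ - m₁‖² + tr Σ₁ + tr Σ₂) - 2 ∫ (x₁ - m₁) ⬝ (x₂ - m₂) dπ`,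
so only the cross term needs an upper bound. For positive definite `T`,
`2 u ⬝ v ≤ uᵀ T u + vᵀ T⁻¹ v` pointwise, and integrating bounds the cross term by
`c₁ (tr (T Σ₁) + tr (T⁻¹ Σ₂)) / 2`. With `A = Σ₁^{1/2}` and `R = (A Σ₂ A)^{1/2}`, the choice
`T = A⁻¹ R A⁻¹` gives exactly `2 tr R`; when `A` or `R` is singular, the perturbation
`T = (A + ε²)⁻¹ (R + ε) (A + ε²)⁻¹` gives `2 tr R + O(ε)`.
-/

open scoped MatrixOrder

lemma msqrt_eq_sqrt {d : ℕ} {A : Matrix (Fin d) (Fin d) ℝ} (hA : A.PosSemidef) :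
    msqrt A = CFC.sqrt A := by
  rw [CFC.sqrt_eq_real_sqrt A hA.nonneg, cfcₙ_eq_cfc, hA.1.cfc_eq, IsHermitian.cfc, msqrt,
    dif_pos hA, Unitary.conjStarAlgAut_apply]
  rfl

namespace Matrix

variable {n : Type*} [Fintype n] [DecidableEq n] {A P Q R S : Matrix n n ℝ}

lemma PosSemidef.trace_mul_nonneg (hP : P.PosSemidef) (hQ : Q.PosSemidef) :
    0 ≤ (P * Q).trace := by
  have hs := (CFC.sqrt_nonneg P).posSemidef
  have h : (P * Q).trace = ((CFC.sqrt P)ᴴ * Q * CFC.sqrt P).trace := by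
    rw [hs.isHermitian.eq, trace_mul_cycle, CFC.sqrt_mul_sqrt_self P hP.nonneg]
  exact h ▸ (hQ.conjTranspose_mul_mul_same _).trace_nonneg

lemma PosSemidef.trace_mul_le_trace_mul (hA : A.PosSemidef) (hPQ : P ≤ Q) :
    (A * P).trace ≤ (A * Q).trace := by
  have := hA.trace_mul_nonneg (le_iff.mp hPQ)
  rw [Matrix.mul_sub, trace_sub] at this
  linarith

omit [Fintype n] in
lemma PosSemidef.posDef_add_smul_one (hA : A.PosSemidef) {ε : ℝ} (hε : 0 < ε) :
    (A + ε • 1).PosDef :=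
  PosDef.posSemidef_add hA (PosDef.one.smul hε)

lemma two_mul_dotProduct_le_of_posDef {T : Matrix n n ℝ} (hT : T.PosDef) (u v : n → ℝ) :
    2 * (u ⬝ᵥ v) ≤ u ⬝ᵥ T *ᵥ u + v ⬝ᵥ T⁻¹ *ᵥ v := by
  have hTu := (isUnit_iff_isUnit_det _).mp hT.isUnit
  have h := hT.posSemidef.dotProduct_mulVec_nonneg (u - T⁻¹ *ᵥ v)
  have hTT : T *ᵥ (T⁻¹ *ᵥ v) = v := by rw [mulVec_mulVec, mul_nonsing_inv _ hTu, one_mulVec]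
  have hTt : Tᵀ = T := by simpa [conjTranspose_eq_transpose_of_trivial] using hT.isHermitian.eq
  have hsymm : (T⁻¹ *ᵥ v) ⬝ᵥ T *ᵥ u = u ⬝ᵥ v := by
    rw [dotProduct_comm, ← vecMul_transpose, ← dotProduct_mulVec, hTt, hTT]
  rw [star_trivial, mulVec_sub, hTT, sub_dotProduct, dotProduct_sub, dotProduct_sub, hsymm,
    dotProduct_comm (T⁻¹ *ᵥ v)] at h
  linarith

lemma conj_inv_add_smul_one_le_one (hA : A.PosSemidef) {δ : ℝ} (hδ : 0 < δ) :
    (A + δ • 1)⁻¹ * (A * A) * (A + δ • 1)⁻¹ ≤ 1 := by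
  have hAδ := hA.posDef_add_smul_one hδ
  have hAδu := (isUnit_iff_isUnit_det _).mp hAδ.isUnit
  have hone : (A + δ • 1)⁻¹ * ((A + δ • 1) * (A + δ • 1)) * (A + δ • 1)⁻¹ = 1 := by
    rw [Matrix.mul_assoc, Matrix.mul_assoc, Matrix.mul_nonsing_inv _ hAδu, Matrix.mul_one,
      Matrix.nonsing_inv_mul _ hAδu]
  have hdiff : (A + δ • 1) * (A + δ • 1) - A * A = (2 * δ) • A + (δ ^ 2) • 1 := by
    simp only [Matrix.add_mul, Matrix.mul_add, Matrix.smul_mul, Matrix.mul_smul, Matrix.one_mul,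
      Matrix.mul_one]
    module
  have hsub : 1 - (A + δ • 1)⁻¹ * (A * A) * (A + δ • 1)⁻¹
      = (A + δ • 1)⁻¹ * ((2 * δ) • A + (δ ^ 2) • 1) * (A + δ • 1)⁻¹ := by
    rw [← hdiff, Matrix.mul_sub, Matrix.sub_mul, hone]
  have hpsd : ((2 * δ) • A + (δ ^ 2) • (1 : Matrix n n ℝ)).PosSemidef :=
    (hA.smul (by positivity : (0 : ℝ) ≤ 2 * δ)).add
      (PosSemidef.one.smul (by positivity : (0 : ℝ) ≤ δ ^ 2))
  have hconj := hpsd.mul_mul_conjTranspose_same (A + δ • 1)⁻¹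
  rwa [hAδ.inv.isHermitian.eq, ← hsub, ← le_iff] at hconj

lemma add_smul_one_mul_mul_add_smul_one_le (hA : A.IsHermitian) (hS : S.PosSemidef) {δ : ℝ}
    (hδ : 0 ≤ δ) :
    (A + δ • 1) * S * (A + δ • 1) ≤ (1 + δ) • (A * S * A) + (δ * (1 + δ)) • S := by
  have hdiff : (1 + δ) • (A * S * A) + (δ * (1 + δ)) • S - (A + δ • 1) * S * (A + δ • 1)
      = δ • ((A - 1)ᴴ * S * (A - 1)) := by
    rw [conjTranspose_sub, hA.eq, conjTranspose_one]
    simp only [Matrix.add_mul, Matrix.mul_add, Matrix.sub_mul, Matrix.mul_sub, Matrix.smul_mul,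
      Matrix.mul_smul, Matrix.one_mul, Matrix.mul_one, add_smul, one_smul]
    module
  rw [le_iff, hdiff]
  exact (hS.conjTranspose_mul_mul_same _).smul hδ

lemma inv_add_smul_one_le (hR : R.PosSemidef) {ε : ℝ} (hε : 0 < ε) :
    (R + ε • 1)⁻¹ ≤ ε⁻¹ • 1 := by
  set B := R + ε • 1
  have hB := hR.posDef_add_smul_one hε
  have hBu := (isUnit_iff_isUnit_det _).mp hB.isUnit
  have hBinv : B⁻¹ * B = 1 := Matrix.nonsing_inv_mul _ hBu
  have hdiff : ε⁻¹ • 1 - B⁻¹ = ε⁻¹ • (B⁻¹ * (R * B) * (B⁻¹)ᴴ) := by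
    rw [hB.inv.isHermitian.eq, Matrix.mul_assoc, Matrix.mul_assoc,
      Matrix.mul_nonsing_inv _ hBu, Matrix.mul_one,
      show R = B - ε • 1 by simp [B], Matrix.mul_sub, hBinv, Matrix.mul_smul, Matrix.mul_one,
      smul_sub, smul_smul, inv_mul_cancel₀ hε.ne', one_smul]
  have hRB : (R * B).PosSemidef := by
    rw [Matrix.mul_add, Matrix.mul_smul, Matrix.mul_one]
    simpa only [hR.isHermitian.eq] using (posSemidef_conjTranspose_mul_self R).add (hR.smul hε.le)
  rw [le_iff, hdiff]
  exact (hRB.mul_mul_conjTranspose_same _).smul (inv_nonneg.mpr hε.le)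

lemma trace_inv_add_smul_one_mul_mul_self_le (hR : R.PosSemidef) {ε : ℝ} (hε : 0 < ε) :
    ((R + ε • 1)⁻¹ * (R * R)).trace ≤ R.trace := by
  set B := R + ε • 1
  have hB := hR.posDef_add_smul_one hε
  have hBu := (isUnit_iff_isUnit_det _).mp hB.isUnit
  have hBR : B⁻¹ * R = 1 - ε • B⁻¹ := by
    rw [show R = B - ε • 1 by simp [B], Matrix.mul_sub, Matrix.nonsing_inv_mul _ hBu,
      Matrix.mul_smul, Matrix.mul_one]
  have h : B⁻¹ * (R * R) = R - ε • (B⁻¹ * R) := by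
    rw [← Matrix.mul_assoc]
    nth_rw 1 [hBR]
    rw [Matrix.sub_mul, Matrix.one_mul, Matrix.smul_mul]
  rw [h, trace_sub, trace_smul, smul_eq_mul]
  nlinarith [hB.inv.posSemidef.trace_mul_nonneg hR]

lemma trace_inv_add_smul_one_mul_le (hR : R.PosSemidef) (hS : S.PosSemidef) {ε : ℝ}
    (hε : 0 < ε) : ((R + ε • 1)⁻¹ * S).trace ≤ ε⁻¹ * S.trace :=
  calc ((R + ε • 1)⁻¹ * S).trace = (S * (R + ε • 1)⁻¹).trace := trace_mul_comm _ _
    _ ≤ (S * (ε⁻¹ • 1)).trace := hS.trace_mul_le_trace_mul (inv_add_smul_one_le hR hε)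
    _ = ε⁻¹ * S.trace := by rw [Matrix.mul_smul, Matrix.mul_one, trace_smul, smul_eq_mul]

lemma exists_posDef_trace_mul_add_trace_inv_mul_le_add_mul (hA : A.PosSemidef)
    (hS : S.PosSemidef) (hR : R.PosSemidef) (hRR : R * R = A * S * A) {ε : ℝ} (hε : 0 < ε) :
    ∃ T : Matrix n n ℝ, T.PosDef ∧ (T * (A * A)).trace + (T⁻¹ * S).trace
      ≤ 2 * R.trace + ε * (Fintype.card n + ε * R.trace + (1 + ε ^ 2) * S.trace) := by
  set Aε := A + ε ^ 2 • 1
  set B := R + ε • 1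
  have hAε := hA.posDef_add_smul_one (pow_pos hε 2)
  have hAεu := (isUnit_iff_isUnit_det _).mp hAε.isUnit
  have hB := hR.posDef_add_smul_one hε
  have hT : (Aε⁻¹ * B * Aε⁻¹).PosDef := by
    have := hB.mul_mul_conjTranspose_same
      (vecMul_injective_iff_isUnit.mpr (isUnit_nonsing_inv_iff.mpr hAε.isUnit))
    rwa [hAε.inv.isHermitian.eq] at this
  have hTinv : (Aε⁻¹ * B * Aε⁻¹)⁻¹ = Aε * B⁻¹ * Aε := by
    rw [Matrix.mul_inv_rev, Matrix.mul_inv_rev, nonsing_inv_nonsing_inv _ hAεu, Matrix.mul_assoc]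
  have hfirst : (Aε⁻¹ * B * Aε⁻¹ * (A * A)).trace ≤ R.trace + ε * Fintype.card n := by
    calc (Aε⁻¹ * B * Aε⁻¹ * (A * A)).trace = (B * (Aε⁻¹ * (A * A) * Aε⁻¹)).trace := by
          simp only [Matrix.mul_assoc]
          rw [trace_mul_comm]
          simp only [Matrix.mul_assoc]
      _ ≤ (B * 1).trace := hB.posSemidef.trace_mul_le_trace_mul
          (conj_inv_add_smul_one_le_one hA (pow_pos hε 2))
      _ = R.trace + ε * Fintype.card n := by
          rw [Matrix.mul_one, trace_add, trace_smul, trace_one, smul_eq_mul]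
  have hsecond : ((Aε * B⁻¹ * Aε) * S).trace
      ≤ (1 + ε ^ 2) * R.trace + ε ^ 2 * (1 + ε ^ 2) * (ε⁻¹ * S.trace) := by
    calc ((Aε * B⁻¹ * Aε) * S).trace = (B⁻¹ * (Aε * S * Aε)).trace := by
          simp only [Matrix.mul_assoc]
          rw [trace_mul_comm]
          simp only [Matrix.mul_assoc]
      _ ≤ (B⁻¹ * ((1 + ε ^ 2) • (A * S * A) + (ε ^ 2 * (1 + ε ^ 2)) • S)).trace :=
          hB.inv.posSemidef.trace_mul_le_trace_mul
            (add_smul_one_mul_mul_add_smul_one_le hA.isHermitian hS (sq_nonneg ε))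
      _ = (1 + ε ^ 2) * (B⁻¹ * (R * R)).trace + ε ^ 2 * (1 + ε ^ 2) * (B⁻¹ * S).trace := by
          rw [hRR, Matrix.mul_add, Matrix.mul_smul, Matrix.mul_smul, trace_add, trace_smul,
            trace_smul, smul_eq_mul, smul_eq_mul]
      _ ≤ _ := by
          gcongr
          · exact trace_inv_add_smul_one_mul_mul_self_le hR hε
          · exact trace_inv_add_smul_one_mul_le hR hS hε
  refine ⟨_, hT, ?_⟩
  rw [hTinv]
  have hε' : ε ^ 2 * (1 + ε ^ 2) * (ε⁻¹ * S.trace) = ε * ((1 + ε ^ 2) * S.trace) := by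
    field_simp
  nlinarith

lemma posSemidef_sqrt_mul_mul_sqrt (hS : S.PosSemidef) (A : Matrix n n ℝ) :
    (CFC.sqrt A * S * CFC.sqrt A).PosSemidef := by
  simpa only [(CFC.sqrt_nonneg A).posSemidef.isHermitian.eq] using
    hS.conjTranspose_mul_mul_same (CFC.sqrt A)

lemma exists_posDef_trace_mul_add_trace_inv_mul_le (hP : P.PosSemidef) (hQ : Q.PosSemidef)
    {η : ℝ} (hη : 0 < η) :
    ∃ T : Matrix n n ℝ, T.PosDef ∧ (T * P).trace + (T⁻¹ * Q).trace
      ≤ 2 * (CFC.sqrt (CFC.sqrt P * Q * CFC.sqrt P)).trace + η := by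
  set A := CFC.sqrt P
  set R := CFC.sqrt (A * Q * A)
  have hlim : Filter.Tendsto
      (fun ε : ℝ => ε * (Fintype.card n + ε * R.trace + (1 + ε ^ 2) * Q.trace))
      (nhdsWithin 0 (Set.Ioi 0)) (nhds 0) := by
    have hcont : Continuous
        fun ε : ℝ => ε * (Fintype.card n + ε * R.trace + (1 + ε ^ 2) * Q.trace) := by
      fun_prop
    simpa using tendsto_nhdsWithin_of_tendsto_nhds (hcont.tendsto 0)
  obtain ⟨ε, hεη, hε⟩ := ((hlim.eventually (gt_mem_nhds hη)).and self_mem_nhdsWithin).exists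
  obtain ⟨T, hT, hTr⟩ := exists_posDef_trace_mul_add_trace_inv_mul_le_add_mul
    (CFC.sqrt_nonneg P).posSemidef hQ (CFC.sqrt_nonneg _).posSemidef
    (CFC.sqrt_mul_sqrt_self _ (posSemidef_sqrt_mul_mul_sqrt hQ P).nonneg) (Set.mem_Ioi.mp hε)
  rw [CFC.sqrt_mul_sqrt_self P hP.nonneg] at hTr
  exact ⟨T, hT, hTr.trans (by linarith)⟩

end Matrix

namespace MeasureTheory

lemma memLp_two_id_of_integrable_norm_sq_add {E F : Type*}
    [NormedAddCommGroup E] [MeasurableSpace E] [BorelSpace E] [SecondCountableTopology E]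
    [NormedAddCommGroup F] [MeasurableSpace F] [BorelSpace F] [SecondCountableTopology F]
    {μ : Measure (E × F)} (h : Integrable (fun p => ‖p.1‖ ^ 2 + ‖p.2‖ ^ 2) μ) :
    MemLp id 2 μ := by
  refine (memLp_two_iff_integrable_sq_norm aestronglyMeasurable_id).mpr
    (h.mono (by fun_prop) (Filter.Eventually.of_forall fun p => ?_))
  rw [Real.norm_of_nonneg (by positivity), Real.norm_of_nonneg (by positivity), id,
    Prod.norm_def]
  rcases max_cases ‖p.1‖ ‖p.2‖ with ⟨h, -⟩ | ⟨h, -⟩ <;> rw [h] <;>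
    linarith [sq_nonneg ‖p.1‖, sq_nonneg ‖p.2‖]

variable {α ι : Type*} [MeasurableSpace α] [Fintype ι] {ν : Measure α} {f g : α → ι → ℝ}

lemma MemLp.ofLp_apply {p : ENNReal} {F : α → EuclideanSpace ℝ ι} (hF : MemLp F p ν) (i : ι) :
    MemLp (fun x => F x i) p ν := by
  simpa using hF.continuousLinearMap_comp (EuclideanSpace.proj (𝕜 := ℝ) i)

noncomputable def secondMoment (ν : Measure α) (f : α → ι → ℝ) : Matrix ι ι ℝ :=
  Matrix.of fun i j => ∫ x, f x i * f x j ∂ν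

lemma memLp_mulVec (hf : ∀ i, MemLp (fun x => f x i) 2 ν) (T : Matrix ι ι ℝ) (i : ι) :
    MemLp (fun x => (T *ᵥ f x) i) 2 ν := by
  simpa only [mulVec, dotProduct, Finset.sum_apply] using
    memLp_finsetSum Finset.univ fun j _ => (hf j).const_mul (T i j)

omit [Fintype ι] in
lemma integrable_mul_of_memLp (hf : ∀ i, MemLp (fun x => f x i) 2 ν)
    (hg : ∀ i, MemLp (fun x => g x i) 2 ν) (i j : ι) : Integrable (fun x => f x i * g x j) ν :=
  (hf i).integrable_mul (hg j)

lemma integrable_dotProduct (hf : ∀ i, MemLp (fun x => f x i) 2 ν)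
    (hg : ∀ i, MemLp (fun x => g x i) 2 ν) : Integrable (fun x => f x ⬝ᵥ g x) ν := by
  simpa only [dotProduct] using
    integrable_finsetSum _ fun i _ => integrable_mul_of_memLp hf hg i i

lemma integral_dotProduct (hf : ∀ i, MemLp (fun x => f x i) 2 ν)
    (hg : ∀ i, MemLp (fun x => g x i) 2 ν) :
    ∫ x, f x ⬝ᵥ g x ∂ν = ∑ i, ∫ x, f x i * g x i ∂ν :=
  integral_finsetSum _ fun i _ => integrable_mul_of_memLp hf hg i i

lemma integral_dotProduct_mulVec (hf : ∀ i, MemLp (fun x => f x i) 2 ν) (T : Matrix ι ι ℝ) :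
    ∫ x, f x ⬝ᵥ T *ᵥ f x ∂ν = (T * secondMoment ν f).trace := by
  rw [integral_dotProduct hf (memLp_mulVec hf T)]
  refine Finset.sum_congr rfl fun i _ => ?_
  simp only [mulVec, dotProduct, Finset.mul_sum, diag_apply, mul_apply, secondMoment, of_apply]
  rw [integral_finsetSum _ fun j _ => ?_]
  · refine Finset.sum_congr rfl fun j _ => ?_
    rw [← integral_const_mul]
    congr 1 with x
    ring
  · simpa only [mul_left_comm] using (integrable_mul_of_memLp hf hf i j).const_mul (T i j)

lemma two_mul_integral_dotProduct_le [DecidableEq ι] (hf : ∀ i, MemLp (fun x => f x i) 2 ν)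
    (hg : ∀ i, MemLp (fun x => g x i) 2 ν) {T : Matrix ι ι ℝ} (hT : T.PosDef) :
    2 * ∫ x, f x ⬝ᵥ g x ∂ν ≤ (T * secondMoment ν f).trace + (T⁻¹ * secondMoment ν g).trace := by
  rw [← integral_dotProduct_mulVec hf, ← integral_dotProduct_mulVec hg, ← integral_const_mul,
    ← integral_add (integrable_dotProduct hf (memLp_mulVec hf T))
      (integrable_dotProduct hg (memLp_mulVec hg _))]
  exact integral_mono ((integrable_dotProduct hf hg).const_mul 2)
    ((integrable_dotProduct hf (memLp_mulVec hf T)).add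
      (integrable_dotProduct hg (memLp_mulVec hg _)))
    fun x => two_mul_dotProduct_le_of_posDef hT (f x) (g x)

lemma integral_sq_const_add_sub [IsFiniteMeasure ν] {u v : α → ℝ} (a : ℝ) (hu : MemLp u 2 ν)
    (hv : MemLp v 2 ν) (hu0 : ∫ x, u x ∂ν = 0) (hv0 : ∫ x, v x ∂ν = 0) :
    ∫ x, (a + v x - u x) ^ 2 ∂ν
      = ν.real Set.univ * a ^ 2 + ∫ x, u x * u x ∂ν + ∫ x, v x * v x ∂ν
        - 2 * ∫ x, u x * v x ∂ν := by
  have hexpand : (fun x => (a + v x - u x) ^ 2) = fun x =>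
      (a ^ 2 + (2 * a * v x - 2 * a * u x)) + ((u x * u x + v x * v x) - 2 * (u x * v x)) := by
    ext x; ring
  have huu : Integrable (fun x => u x * u x) ν := hu.integrable_mul hu
  have hvv : Integrable (fun x => v x * v x) ν := hv.integrable_mul hv
  have huv : Integrable (fun x => u x * v x) ν := hu.integrable_mul hv
  have hv1 : Integrable (fun x => 2 * a * v x) ν := (hv.integrable one_le_two).const_mul _
  have hu1 : Integrable (fun x => 2 * a * u x) ν := (hu.integrable one_le_two).const_mul _
  have hlin : Integrable (fun x => 2 * a * v x - 2 * a * u x) ν := hv1.sub hu1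
  have haff : Integrable (fun x => a ^ 2 + (2 * a * v x - 2 * a * u x)) ν :=
    (integrable_const _).add hlin
  have hsq : Integrable (fun x => u x * u x + v x * v x) ν := huu.add hvv
  have hquad : Integrable (fun x => u x * u x + v x * v x - 2 * (u x * v x)) ν :=
    hsq.sub (huv.const_mul 2)
  rw [hexpand, integral_add haff hquad, integral_add (integrable_const _) hlin,
    integral_sub hv1 hu1, integral_sub hsq (huv.const_mul 2), integral_add huu hvv,
    integral_const_mul, integral_const_mul, integral_const_mul, hu0, hv0, integral_const,
    smul_eq_mul]
  ring

lemma integral_sum_sq_const_add_sub [IsFiniteMeasure ν] (a : ι → ℝ)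
    (hf : ∀ i, MemLp (fun x => f x i) 2 ν) (hg : ∀ i, MemLp (fun x => g x i) 2 ν)
    (hf0 : ∀ i, ∫ x, f x i ∂ν = 0) (hg0 : ∀ i, ∫ x, g x i ∂ν = 0) :
    ∫ x, ∑ i, (a i + g x i - f x i) ^ 2 ∂ν
      = ν.real Set.univ * ∑ i, a i ^ 2 + (secondMoment ν f).trace + (secondMoment ν g).trace
        - 2 * ∫ x, f x ⬝ᵥ g x ∂ν := by
  have hsq : ∀ i, Integrable (fun x => (a i + g x i - f x i) ^ 2) ν := fun i =>
    (((memLp_const (a i)).add (hg i)).sub (hf i)).integrable_sq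
  rw [integral_finsetSum _ fun i _ => hsq i, integral_dotProduct hf hg, Finset.mul_sum,
    Finset.mul_sum]
  simp only [trace, diag_apply, secondMoment, of_apply, ← Finset.sum_add_distrib,
    ← Finset.sum_sub_distrib]
  exact Finset.sum_congr rfl fun i _ =>
    integral_sq_const_add_sub (a i) (hf i) (hg i) (hf0 i) (hg0 i)

lemma integral_dotProduct_le_mul_trace_sqrt [DecidableEq ι]
    (hf : ∀ i, MemLp (fun x => f x i) 2 ν) (hg : ∀ i, MemLp (fun x => g x i) 2 ν) {c : ℝ}
    (hc : 0 < c) {S₁ S₂ : Matrix ι ι ℝ}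
    (hS₁ : S₁.PosSemidef) (hS₂ : S₂.PosSemidef) (hMf : secondMoment ν f = c • S₁)
    (hMg : secondMoment ν g = c • S₂) :
    ∫ x, f x ⬝ᵥ g x ∂ν ≤ c * (CFC.sqrt (CFC.sqrt S₁ * S₂ * CFC.sqrt S₁)).trace := by
  refine le_of_forall_pos_le_add fun η hη => ?_
  obtain ⟨T, hT, hTr⟩ := exists_posDef_trace_mul_add_trace_inv_mul_le hS₁ hS₂
    (div_pos (mul_pos two_pos hη) hc)
  have h := two_mul_integral_dotProduct_le hf hg hT
  rw [hMf, hMg, Matrix.mul_smul, Matrix.mul_smul, trace_smul, trace_smul, smul_eq_mul,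
    smul_eq_mul] at h
  have hη' : c * (2 * η / c) = 2 * η := by field_simp
  nlinarith

theorem le_integral_norm_sub_sq [DecidableEq ι] [IsFiniteMeasure ν] {c : ℝ} (hc : 0 < c)
    (hν : ν.real Set.univ = c) {F G : α → EuclideanSpace ℝ ι} (hF : MemLp F 2 ν)
    (hG : MemLp G 2 ν) {m₁ m₂ : EuclideanSpace ℝ ι} {S₁ S₂ : Matrix ι ι ℝ}
    (hS₁ : S₁.PosSemidef) (hS₂ : S₂.PosSemidef)
    (hmean₁ : ∀ i, ∫ x, F x i ∂ν = c * m₁ i) (hmean₂ : ∀ i, ∫ x, G x i ∂ν = c * m₂ i)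
    (hcov₁ : ∀ i j, ∫ x, (F x i - m₁ i) * (F x j - m₁ j) ∂ν = c * S₁ i j)
    (hcov₂ : ∀ i j, ∫ x, (G x i - m₂ i) * (G x j - m₂ j) ∂ν = c * S₂ i j) :
    c * (‖m₂ - m₁‖ ^ 2 +
        (S₁ + S₂ - (2 : ℝ) • CFC.sqrt (CFC.sqrt S₁ * S₂ * CFC.sqrt S₁)).trace)
      ≤ ∫ x, ‖G x - F x‖ ^ 2 ∂ν := by
  set X : α → ι → ℝ := fun x i => F x i - m₁ i
  set Y : α → ι → ℝ := fun x i => G x i - m₂ i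
  have hX i : MemLp (fun x => X x i) 2 ν := (hF.ofLp_apply i).sub (memLp_const (m₁ i))
  have hY i : MemLp (fun x => Y x i) 2 ν := (hG.ofLp_apply i).sub (memLp_const (m₂ i))
  have hX0 i : ∫ x, X x i ∂ν = 0 := by
    rw [integral_sub ((hF.ofLp_apply i).integrable one_le_two) (integrable_const _),
      integral_const, hν, hmean₁, smul_eq_mul, sub_eq_zero, mul_comm]
  have hY0 i : ∫ x, Y x i ∂ν = 0 := by
    rw [integral_sub ((hG.ofLp_apply i).integrable one_le_two) (integrable_const _),
      integral_const, hν, hmean₂, smul_eq_mul, sub_eq_zero, mul_comm]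
  have hMX : secondMoment ν X = c • S₁ := by ext i j; exact hcov₁ i j
  have hMY : secondMoment ν Y = c • S₂ := by ext i j; exact hcov₂ i j
  have hcost : ∫ x, ‖G x - F x‖ ^ 2 ∂ν
      = c * ‖m₂ - m₁‖ ^ 2 + c * S₁.trace + c * S₂.trace - 2 * ∫ x, X x ⬝ᵥ Y x ∂ν := by
    have hpt : (fun x => ‖G x - F x‖ ^ 2)
        = fun x => ∑ i, ((m₂ - m₁) i + Y x i - X x i) ^ 2 := by
      ext x
      rw [EuclideanSpace.real_norm_sq_eq]
      congr 1 with i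
      simp only [X, Y, PiLp.sub_apply]
      ring
    rw [hpt, integral_sum_sq_const_add_sub _ hX hY hX0 hY0, hMX, hMY, hν,
      ← EuclideanSpace.real_norm_sq_eq, trace_smul, trace_smul, smul_eq_mul, smul_eq_mul]
  have hcross := integral_dotProduct_le_mul_trace_sqrt hX hY hc hS₁ hS₂ hMX hMY
  rw [hcost, trace_sub, trace_add, trace_smul, smul_eq_mul]
  linarith

end MeasureTheory

theorem transport_cost_lower_bound_general {d : ℕ}
    (μ₁ μ₂ : Measure (EuclideanSpace ℝ (Fin d)))
    (c₁ : ℝ) (hc₁ : 0 < c₁)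
    (hmass₁ : μ₁ Set.univ = ENNReal.ofReal c₁)
    (m₁ m₂ : EuclideanSpace ℝ (Fin d))
    (S₁ S₂ : Matrix (Fin d) (Fin d) ℝ)
    (hS₁ : S₁.PosSemidef) (hS₂ : S₂.PosSemidef)
    (hmean₁ : ∀ i, ∫ x, x i ∂μ₁ = c₁ * m₁ i)
    (hmean₂ : ∀ i, ∫ x, x i ∂μ₂ = c₁ * m₂ i)
    (hcov₁ : ∀ i j, ∫ x, (x i - m₁ i) * (x j - m₁ j) ∂μ₁ = c₁ * S₁ i j)
    (hcov₂ : ∀ i j, ∫ x, (x i - m₂ i) * (x j - m₂ j) ∂μ₂ = c₁ * S₂ i j)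
    (μ : Measure (EuclideanSpace ℝ (Fin d) × EuclideanSpace ℝ (Fin d)))
    [IsFiniteMeasure μ]
    (hfst : μ.fst = μ₁) (hsnd : μ.snd = μ₂)
    (hmom : Integrable (fun p => ‖p.1‖ ^ 2 + ‖p.2‖ ^ 2) μ) :
    c₁ * (‖m₂ - m₁‖ ^ 2 +
        (S₁ + S₂ - (2 : ℝ) • msqrt (msqrt S₁ * S₂ * msqrt S₁)).trace)
      ≤ ∫ p, ‖p.2 - p.1‖ ^ 2 ∂μ := by
  have hmass : μ.real Set.univ = c₁ := by
    rw [measureReal_def, ← Measure.fst_univ, hfst, hmass₁, ENNReal.toReal_ofReal hc₁.le]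
  have hL2 := memLp_two_id_of_integrable_norm_sq_add hmom
  have hfst_int (φ : EuclideanSpace ℝ (Fin d) → ℝ) (hφ : Continuous φ) :
      ∫ p, φ p.1 ∂μ = ∫ x, φ x ∂μ₁ := by
    rw [← hfst, Measure.fst, integral_map measurable_fst.aemeasurable hφ.aestronglyMeasurable]
  have hsnd_int (φ : EuclideanSpace ℝ (Fin d) → ℝ) (hφ : Continuous φ) :
      ∫ p, φ p.2 ∂μ = ∫ x, φ x ∂μ₂ := by
    rw [← hsnd, Measure.snd, integral_map measurable_snd.aemeasurable hφ.aestronglyMeasurable]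
  rw [msqrt_eq_sqrt hS₁, msqrt_eq_sqrt (posSemidef_sqrt_mul_mul_sqrt hS₂ S₁)]
  exact le_integral_norm_sub_sq (F := Prod.fst) (G := Prod.snd) hc₁ hmass hL2.fst hL2.snd
    hS₁ hS₂
    (fun i => (hfst_int (· i) (by fun_prop)).trans (hmean₁ i))
    (fun i => (hsnd_int (· i) (by fun_prop)).trans (hmean₂ i))
    (fun i j =>
      (hfst_int (fun x => (x i - m₁ i) * (x j - m₁ j)) (by fun_prop)).trans (hcov₁ i j))
    (fun i j =>
      (hsnd_int (fun x => (x i - m₂ i) * (x j - m₂ j)) (by fun_prop)).trans (hcov₂ i j))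

/-- Gelbrich lower bound on the quadratic transport cost between two measures
with equal mass `c₁`, means `m₁, m₂` and covariances `S₁, S₂`. -/
theorem transport_cost_lower_bound {d : ℕ}
    (μ₁ μ₂ : Measure (EuclideanSpace ℝ (Fin d)))
    (c₁ : ℝ) (hc₁ : 0 < c₁)
    (hmass₁ : μ₁ Set.univ = ENNReal.ofReal c₁)
    (hmass₂ : μ₂ Set.univ = ENNReal.ofReal c₁)
    (m₁ m₂ : EuclideanSpace ℝ (Fin d))
    (S₁ S₂ : Matrix (Fin d) (Fin d) ℝ)
    (hS₁ : S₁.PosSemidef) (hS₂ : S₂.PosSemidef)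
    (hmean₁ : ∀ i, ∫ x, x i ∂μ₁ = c₁ * m₁ i)
    (hmean₂ : ∀ i, ∫ x, x i ∂μ₂ = c₁ * m₂ i)
    (hcov₁ : ∀ i j, ∫ x, (x i - m₁ i) * (x j - m₁ j) ∂μ₁ = c₁ * S₁ i j)
    (hcov₂ : ∀ i j, ∫ x, (x i - m₂ i) * (x j - m₂ j) ∂μ₂ = c₁ * S₂ i j)
    (μ : Measure (EuclideanSpace ℝ (Fin d) × EuclideanSpace ℝ (Fin d)))
    [IsFiniteMeasure μ]
    (hfst : μ.fst = μ₁) (hsnd : μ.snd = μ₂)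
    (hmom : Integrable (fun p => ‖p.1‖ ^ 2 + ‖p.2‖ ^ 2) μ) :
    c₁ * (‖m₂ - m₁‖ ^ 2 +
        (S₁ + S₂ - (2 : ℝ) • msqrt (msqrt S₁ * S₂ * msqrt S₁)).trace)
      ≤ ∫ p, ‖p.2 - p.1‖ ^ 2 ∂μ :=
  transport_cost_lower_bound_general μ₁ μ₂ c₁ hc₁ hmass₁ m₁ m₂ S₁ S₂ hS₁ hS₂ hmean₁ hmean₂ hcov₁
    hcov₂ μ hfst hsnd hmom
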